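/- arXiv:2109.09984 — 2 statements merged into one kernel-verified Lean document; each statement's English description precedes it below -/
import Mathlib

section
/- Let G be a finite group, (H,K) a generalized strong Shoda pair of G with strong inductive chain H = H_0 ≤ H_1 ≤ ⋯ ≤ H_n = G, and λ a linear character of H with kernel K. For each 0 ≤ i ≤ n−1 put C_i = Cen_{H_{i+1}}(e_ℚ(λ^{H_i})). Then ℚC_i e_ℚ(λ^{H_i}) is isomorphic to the crossed product algebra ℚH_i e_ℚ(λ^{H_i}) *^{σ_{H_i}}_{τ_{H_i}} C_i/H_i, where for each x ∈ C_i/H_i a coset representative x̄ ∈ C_i is fixed, σ_{H_i} : C_i/H_i → Aut(ℚH_i e_ℚ(λ^{H_i})) sends x to the conjugation automorphism of ℚH_i e_ℚ(λ^{H_i}) induced by x̄, and τ_{H_i}(x,y) = x̄·ȳ·(x̄ȳ)^{-1} e_ℚ(λ^{H_i}). -/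
/-!
Write `N = H_i`, `C = C_i` and `e = e_ℚ(λ^{H_i})`. Since `e` lies in `ℚN`, is idempotent and
commutes with `C`, the component `ℚC·e` consists exactly of the elements of `ℚC` fixed by right
multiplication with `e`. As `N` is normal in `C`, the right cosets `N x̄` partition `C`; splitting
the support of an element of `ℚC·e` along them writes it as `∑ r_x x̄` with `r_x ∈ ℚN·e`, uniquely
because the summands have disjoint supports. Products of such sums are computed with
`x̄ r = σ_x(r) x̄` and `x̄ ȳ e = τ(x,y) (x̄ȳ)`.
-/

open scoped Classical
set_option linter.unusedSectionVars false

noncomputable section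

namespace PaperGSM

variable {G : Type} [Group G] [Fintype G]

/-- `Ĥ = (1/|N|) ∑_{x ∈ N} x` in the rational group algebra. -/
def hat (N : Subgroup G) : MonoidAlgebra ℚ G :=
  (Nat.card N : ℚ)⁻¹ • ∑ x : N, MonoidAlgebra.of ℚ G (x : G)

/-- conjugation of `X` by `y`, as an equivalence of the subtype. -/
def conjEquiv (X : Subgroup G) (y : G) (h : ∀ x ∈ X, y⁻¹ * x * y ∈ X)
    (h' : ∀ x ∈ X, y * x * y⁻¹ ∈ X) : X ≃ X where
  toFun x := ⟨y⁻¹ * x * y, h x x.2⟩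
  invFun x := ⟨y * x * y⁻¹, h' x x.2⟩
  left_inv x := Subtype.ext (by group)
  right_inv x := Subtype.ext (by group)

lemma sum_conj_eq (X : Subgroup G) (y : G) (h : ∀ x ∈ X, y⁻¹ * x * y ∈ X)
    (h' : ∀ x ∈ X, y * x * y⁻¹ ∈ X) :
    ∑ x : X, MonoidAlgebra.of ℚ G ((x : G) * y)
      = ∑ x : X, MonoidAlgebra.of ℚ G (y * (x : G)) := by
  apply Fintype.sum_equiv (conjEquiv X y h h')
  intro x
  have : (x : G) * y = y * ((conjEquiv X y h h') x : G) := by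
    simp only [conjEquiv, Equiv.coe_fn_mk]
    group
  rw [this]

lemma hat_comm (X Y : Subgroup G) (h : ∀ y ∈ Y, ∀ x ∈ X, y⁻¹ * x * y ∈ X) :
    hat X * hat Y = hat Y * hat X := by
  have key : (∑ x : X, MonoidAlgebra.of ℚ G (x : G)) * (∑ y : Y, MonoidAlgebra.of ℚ G (y : G))
      = (∑ y : Y, MonoidAlgebra.of ℚ G (y : G)) * (∑ x : X, MonoidAlgebra.of ℚ G (x : G)) := by
    rw [Finset.sum_mul_sum, Finset.sum_mul_sum]
    have l : ∀ (x : X) (y : Y),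
        MonoidAlgebra.of ℚ G (x : G) * MonoidAlgebra.of ℚ G (y : G)
          = MonoidAlgebra.of ℚ G ((x : G) * (y : G)) := fun x y => (map_mul _ _ _).symm
    calc ∑ x : X, ∑ y : Y, MonoidAlgebra.of ℚ G (x : G) * MonoidAlgebra.of ℚ G (y : G)
        = ∑ y : Y, ∑ x : X, MonoidAlgebra.of ℚ G ((x : G) * (y : G)) := by
          rw [Finset.sum_comm]
          exact Finset.sum_congr rfl fun y _ => Finset.sum_congr rfl fun x _ => l x y
      _ = ∑ y : Y, ∑ x : X, MonoidAlgebra.of ℚ G ((y : G) * (x : G)) := by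
          refine Finset.sum_congr rfl fun y _ => ?_
          refine sum_conj_eq X (y : G) (fun x hx => h y y.2 x hx) (fun x hx => ?_)
          have := h (y : G)⁻¹ (Y.inv_mem y.2) x hx
          simpa using this
      _ = ∑ y : Y, ∑ x : X, MonoidAlgebra.of ℚ G (y : G) * MonoidAlgebra.of ℚ G (x : G) := by
          exact Finset.sum_congr rfl fun y _ => Finset.sum_congr rfl fun x _ => map_mul (MonoidAlgebra.of ℚ G) _ _
  unfold hat
  rw [smul_mul_smul_comm, smul_mul_smul_comm, key, mul_comm ((Nat.card X : ℚ)⁻¹)]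

instance : Fintype (Subgroup G) :=
  Fintype.ofInjective (fun H : Subgroup G => (H : Set G)) fun _ _ h => SetLike.coe_injective h

/-- `N` is a normal subgroup of `B` (both given as subgroups of the ambient group `G`). -/
def NormalIn (N B : Subgroup G) : Prop :=
  N ≤ B ∧ ∀ b ∈ B, ∀ x ∈ N, b * x * b⁻¹ ∈ N

/-- `L` is a minimal normal subgroup of `H` containing `K` properly. -/
def IsMinNormalOver (H K L : Subgroup G) : Prop :=
  NormalIn L H ∧ K < L ∧ ∀ M : Subgroup G, NormalIn M H → K < M → M ≤ L → M = L

/-- `ε(H,K)`. -/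
def eps (H K : Subgroup G) : MonoidAlgebra ℚ G :=
  if H = K then hat K
  else Finset.noncommProd (Finset.univ.filter (IsMinNormalOver H K))
    (fun L => hat K - hat L) (by
      intro L hL M hM _
      simp only [Finset.coe_filter, Set.mem_setOf_eq, Finset.mem_univ, true_and] at hL hM
      have hKL : K ≤ L := le_of_lt hL.2.1
      have hKH : K ≤ H := hKL.trans hL.1.1
      have normconj : ∀ (A : Subgroup G), NormalIn A H → ∀ y ∈ K, ∀ x ∈ A, y⁻¹ * x * y ∈ A := by
        intro A hA y hy x hx
        have := hA.2 y⁻¹ (H.inv_mem (hKH hy)) x hx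
        simpa using this
      have cKK : Commute (hat K) (hat K) := Commute.refl _
      have cKL : Commute (hat K) (hat L) :=
        (hat_comm L K (normconj L hL.1)).symm
      have cKM : Commute (hat K) (hat M) :=
        (hat_comm M K (normconj M hM.1)).symm
      have cLM : Commute (hat L) (hat M) := by
        refine hat_comm L M ?_
        intro y hy x hx
        have := hL.1.2 y⁻¹ (H.inv_mem (hM.1.1 hy)) x hx
        simpa using this
      exact (cKK.sub_right cKM).sub_left (cKL.symm.sub_right cLM))

/-- conjugation of an element of the group algebra by a group element. -/
def conjEl (g : G) (α : MonoidAlgebra ℚ G) : MonoidAlgebra ℚ G :=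
  MonoidAlgebra.of ℚ G g * α * MonoidAlgebra.of ℚ G g⁻¹

/-- `e(B,H,K)`: the sum of the distinct `B`-conjugates of `ε(H,K)`. -/
def eGHK (B H K : Subgroup G) : MonoidAlgebra ℚ G :=
  ∑ a ∈ Finset.image (fun b : B => conjEl (b : G) (eps H K)) Finset.univ, a


/-- linear extension of a character to the rational group algebra, valued in `ℂ`. -/
def extChar {Γ : Type*} [Group Γ] [Fintype Γ] (χ : Γ → ℂ) (α : MonoidAlgebra ℚ Γ) : ℂ :=
  ∑ g : Γ, (α.coeff g : ℂ) * χ g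

/-- `e` is a primitive central idempotent of the rational group algebra. -/
def IsPCI {Γ : Type*} [Group Γ] (e : MonoidAlgebra ℚ Γ) : Prop :=
  (∀ α, e * α = α * e) ∧ e * e = e ∧ e ≠ 0 ∧
    ∀ a b : MonoidAlgebra ℚ Γ, (∀ α, a * α = α * a) → (∀ α, b * α = α * b) →
      a * a = a → b * b = b → a * b = 0 → a + b = e → a = 0 ∨ b = 0

/-- `e_ℚ(χ)`: the primitive central idempotent of `ℚΓ` associated to the irreducible
character `χ`, i.e. the unique primitive central idempotent on which `χ` does not vanish. -/
def eQchar {Γ : Type*} [Group Γ] [Fintype Γ] (χ : Γ → ℂ) : MonoidAlgebra ℚ Γ :=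
  if h : ∃ e, IsPCI e ∧ extChar χ e ≠ 0 then h.choose else 0

/-- the embedding `ℚB → ℚG` for a subgroup `B` of `G`. -/
def emb (B : Subgroup G) : MonoidAlgebra ℚ B →+* MonoidAlgebra ℚ G :=
  MonoidAlgebra.mapDomainRingHom ℚ B.subtype

/-- the induced character `χ^Γ` of a character `χ` of a subgroup `N` of `Γ`. -/
def indChar {Γ : Type*} [Group Γ] [Fintype Γ] (N : Subgroup Γ) (χ : N → ℂ) : Γ → ℂ :=
  fun g => (Nat.card N : ℂ)⁻¹ * ∑ x : Γ, if h : x * g * x⁻¹ ∈ N then χ ⟨x * g * x⁻¹, h⟩ else 0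

/-- `λ` is a linear character of `H` with kernel `K`. -/
def IsLinCharKer (H K : Subgroup G) (lam : H →* ℂ) : Prop :=
  K ≤ H ∧ ∀ h : H, lam h = 1 ↔ (h : G) ∈ K

/-- given a linear character `lam` of `H ≤ G` and `H ≤ B`, the induced character `λ^B`
of the subgroup `B`. -/
def lamChar {H : Subgroup G} (lam : H →* ℂ) (B : Subgroup G) : B → ℂ :=
  indChar (H.subgroupOf B) (fun y => lam ⟨((y : B) : G), y.2⟩)

/-- `e_ℚ(λ^B)` viewed as an element of `ℚG`. -/
def eQ {H : Subgroup G} (lam : H →* ℂ) (B : Subgroup G) : MonoidAlgebra ℚ G :=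
  emb B (eQchar (lamChar lam B))

/-- `Cen_B(e)`: the centralizer of an element `e` of `ℚG` inside the subgroup `B`. -/
def cen (B : Subgroup G) (e : MonoidAlgebra ℚ G) : Subgroup G where
  carrier := {g | g ∈ B ∧ MonoidAlgebra.of ℚ G g * e = e * MonoidAlgebra.of ℚ G g}
  one_mem' := ⟨B.one_mem, by rw [map_one, one_mul, mul_one]⟩
  mul_mem' := by
    rintro a b ⟨haB, ha⟩ ⟨hbB, hb⟩
    refine ⟨B.mul_mem haB hbB, ?_⟩
    rw [map_mul, mul_assoc, hb, ← mul_assoc, ha, mul_assoc]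
  inv_mem' := by
    rintro a ⟨haB, ha⟩
    refine ⟨B.inv_mem haB, ?_⟩
    have h2 : MonoidAlgebra.of ℚ G a * MonoidAlgebra.of ℚ G a⁻¹ = 1 := by
      rw [← map_mul, mul_inv_cancel, map_one]
    have h1 : MonoidAlgebra.of ℚ G a⁻¹ * MonoidAlgebra.of ℚ G a = 1 := by
      rw [← map_mul, inv_mul_cancel, map_one]
    have hu : Commute ((Units.mk (MonoidAlgebra.of ℚ G a)
        (MonoidAlgebra.of ℚ G a⁻¹) h2 h1 : (MonoidAlgebra ℚ G)ˣ) : MonoidAlgebra ℚ G) e := ha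
    exact hu.units_inv_left

/-- the component `ℚB·e` of the group algebra, as a non-unital subring of `ℚG`. -/
def compIn (B : Subgroup G) (e : MonoidAlgebra ℚ G) : NonUnitalSubring (MonoidAlgebra ℚ G) :=
  NonUnitalSubring.closure (Set.range fun β : MonoidAlgebra ℚ B => emb B β * e)

/-- the center of the component `ℚB·e`, as a non-unital subring of `ℚG`. -/
def centerCompNUS (B : Subgroup G) (e : MonoidAlgebra ℚ G) :
    NonUnitalSubring (MonoidAlgebra ℚ G) where
  carrier := {α | α ∈ compIn B e ∧ ∀ γ ∈ compIn B e, α * γ = γ * α}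
  zero_mem' := ⟨zero_mem _, fun γ _ => by rw [zero_mul, mul_zero]⟩
  add_mem' := by
    rintro a b ⟨ha, ha'⟩ ⟨hb, hb'⟩
    exact ⟨add_mem ha hb, fun γ hγ => by rw [add_mul, mul_add, ha' γ hγ, hb' γ hγ]⟩
  neg_mem' := by
    rintro a ⟨ha, ha'⟩
    exact ⟨neg_mem ha, fun γ hγ => by rw [neg_mul, mul_neg, ha' γ hγ]⟩
  mul_mem' := by
    rintro a b ⟨ha, ha'⟩ ⟨hb, hb'⟩
    refine ⟨mul_mem ha hb, fun γ hγ => ?_⟩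
    rw [mul_assoc, hb' γ hγ, ← mul_assoc, ha' γ hγ, mul_assoc]

lemma conjEl_add (g : G) (α β : MonoidAlgebra ℚ G) :
    conjEl g (α + β) = conjEl g α + conjEl g β := by
  unfold conjEl; rw [mul_add, add_mul]

lemma conjEl_mul (g : G) (α β : MonoidAlgebra ℚ G) :
    conjEl g (α * β) = conjEl g α * conjEl g β := by
  unfold conjEl
  have h1 : MonoidAlgebra.of ℚ G g⁻¹ * MonoidAlgebra.of ℚ G g = 1 := by
    rw [← map_mul, inv_mul_cancel, map_one]
  calc MonoidAlgebra.of ℚ G g * (α * β) * MonoidAlgebra.of ℚ G g⁻¹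
      = MonoidAlgebra.of ℚ G g * α * ((MonoidAlgebra.of ℚ G g⁻¹ * MonoidAlgebra.of ℚ G g) *
        (β * MonoidAlgebra.of ℚ G g⁻¹)) := by rw [h1]; noncomm_ring
    _ = MonoidAlgebra.of ℚ G g * α * MonoidAlgebra.of ℚ G g⁻¹ *
        (MonoidAlgebra.of ℚ G g * β * MonoidAlgebra.of ℚ G g⁻¹) := by noncomm_ring

/-- the fixed points of the conjugation action of (members of) `C` on the center of the
component `ℚB·e`, as a non-unital subring of `ℚG`. -/
def fixedCenter (B : Subgroup G) (e : MonoidAlgebra ℚ G) (C : Subgroup G) :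
    NonUnitalSubring (MonoidAlgebra ℚ G) where
  carrier := {α | α ∈ centerCompNUS B e ∧ ∀ x ∈ C, conjEl x α = α}
  zero_mem' := ⟨zero_mem _, fun x _ => by unfold conjEl; rw [mul_zero, zero_mul]⟩
  add_mem' := by
    rintro a b ⟨ha, ha'⟩ ⟨hb, hb'⟩
    exact ⟨add_mem ha hb, fun x hx => by rw [conjEl_add, ha' x hx, hb' x hx]⟩
  neg_mem' := by
    rintro a ⟨ha, ha'⟩
    refine ⟨neg_mem ha, fun x hx => ?_⟩
    have : conjEl x (-a) = - conjEl x a := by unfold conjEl; rw [mul_neg, neg_mul]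
    rw [this, ha' x hx]
  mul_mem' := by
    rintro a b ⟨ha, ha'⟩ ⟨hb, hb'⟩
    exact ⟨mul_mem ha hb, fun x hx => by rw [conjEl_mul, ha' x hx, hb' x hx]⟩

/-- `(H,K)` is a Shoda pair of `G`. -/
def IsShodaPair (H K : Subgroup G) : Prop :=
  K ≤ H ∧ (∀ h ∈ H, ∀ x ∈ K, h * x * h⁻¹ ∈ K) ∧
    (∃ h ∈ H, ∀ x ∈ H, ∃ n : ℤ, (h ^ n)⁻¹ * x ∈ K) ∧
    ∀ g : G, (∀ h ∈ H, h⁻¹ * g⁻¹ * h * g ∈ H → h⁻¹ * g⁻¹ * h * g ∈ K) → g ∈ H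

/-- `c` is a strong inductive chain from `H` to `G` (with respect to the linear
character `lam` of `H`). -/
def IsStrongInductiveChain (H : Subgroup G) (lam : H →* ℂ) {n : ℕ}
    (c : Fin (n + 1) → Subgroup G) : Prop :=
  c 0 = H ∧ c (Fin.last n) = ⊤ ∧ Monotone c ∧
    ∀ i : Fin n,
      NormalIn (c i.castSucc) (cen (c i.succ) (eQ lam (c i.castSucc))) ∧
      ∀ x ∈ c i.succ, ∀ y ∈ c i.succ,
        conjEl x (eQ lam (c i.castSucc)) ≠ conjEl y (eQ lam (c i.castSucc)) →
        conjEl x (eQ lam (c i.castSucc)) * conjEl y (eQ lam (c i.castSucc)) = 0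

/-- `(H,K)` is a generalized strong Shoda pair of `G`, witnessed by the linear character
`lam` of `H` with kernel `K`. -/
def IsGSSPwith (H K : Subgroup G) (lam : H →* ℂ) : Prop :=
  IsShodaPair H K ∧ IsLinCharKer H K lam ∧
    ∃ (n : ℕ) (c : Fin (n + 1) → Subgroup G), IsStrongInductiveChain H lam c

/-- `(H,K)` is a generalized strong Shoda pair of `G`. -/
def IsGSSP (H K : Subgroup G) : Prop :=
  ∃ lam : H →* ℂ, IsGSSPwith H K lam

/-- `χ` is an irreducible (complex) character of `Γ`. -/
def IsIrrChar (Γ : Type) [Group Γ] (χ : Γ → ℂ) : Prop :=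
  ∃ V : FDRep ℂ Γ, CategoryTheory.Simple V ∧ V.character = χ

/-- `Γ` is a monomial group. -/
def IsMonomialGroup (Γ : Type) [Group Γ] [Fintype Γ] : Prop :=
  ∀ χ : Γ → ℂ, IsIrrChar Γ χ →
    ∃ (N : Subgroup Γ) (lam : N →* ℂ), χ = indChar N fun h => lam h

/-- `G` is a generalized strongly monomial group. -/
def IsGenStronglyMonomial (G : Type) [Group G] [Fintype G] : Prop :=
  ∀ χ : G → ℂ, IsIrrChar G χ →
    ∃ (H K : Subgroup G) (lam : H →* ℂ), IsGSSPwith H K lam ∧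
      χ = indChar H fun h => lam h

/-- `A` is a subnormal subgroup of `G`. -/
def Subnormal (A : Subgroup G) : Prop :=
  ∃ (n : ℕ) (c : Fin (n + 1) → Subgroup G), c 0 = A ∧ c (Fin.last n) = ⊤ ∧
    ∀ i : Fin n, NormalIn (c i.castSucc) (c i.succ)

/-- the Bass unit (Bass cyclic unit) `u_{k,m}(g)`, written in `ℚG` (it has integral
coefficients when `k^m ≡ 1 mod |g|`). -/
def bassQ (g : G) (k m : ℕ) : MonoidAlgebra ℚ G :=
  (∑ i ∈ Finset.range k, MonoidAlgebra.of ℚ G g ^ i) ^ m +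
    (((1 : ℚ) - (k : ℚ) ^ m) / (orderOf g : ℚ)) •
      ∑ i ∈ Finset.range (orderOf g), MonoidAlgebra.of ℚ G g ^ i

/-- the integral group ring `ℤB`, as a subring of `ℚG`. -/
def intRing (B : Subgroup G) : Subring (MonoidAlgebra ℚ G) :=
  Subring.closure (Set.range fun b : B => MonoidAlgebra.of ℚ G (b : G))

/-- `α` is a unit of the integral group ring `ℤB`. -/
def IsUnitOfZ (B : Subgroup G) (α : MonoidAlgebra ℚ G) : Prop :=
  α ∈ intRing B ∧ ∃ β ∈ intRing B, α * β = 1 ∧ β * α = 1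

/-- `Z(U(ℤB))`: the group of central units of `ℤB`, as a subgroup of `(ℚG)ˣ`. -/
def centralZUnits (B : Subgroup G) : Subgroup (MonoidAlgebra ℚ G)ˣ where
  carrier := {u | (u : MonoidAlgebra ℚ G) ∈ intRing B ∧
    ((u⁻¹ : (MonoidAlgebra ℚ G)ˣ) : MonoidAlgebra ℚ G) ∈ intRing B ∧
    ∀ x ∈ intRing B, (u : MonoidAlgebra ℚ G) * x = x * u}
  one_mem' := ⟨one_mem _, by rw [inv_one]; exact ⟨one_mem _, fun x _ => by rw [Units.val_one, one_mul, mul_one]⟩⟩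
  mul_mem' := by
    rintro a b ⟨ha1, ha2, ha3⟩ ⟨hb1, hb2, hb3⟩
    refine ⟨by rw [Units.val_mul]; exact mul_mem ha1 hb1, ?_, ?_⟩
    · rw [mul_inv_rev, Units.val_mul]; exact mul_mem hb2 ha2
    · intro x hx
      rw [Units.val_mul, mul_assoc, hb3 x hx, ← mul_assoc, ha3 x hx, mul_assoc]
  inv_mem' := by
    rintro a ⟨ha1, ha2, ha3⟩
    refine ⟨ha2, by rw [inv_inv]; exact ha1, fun x hx => ?_⟩
    exact Commute.units_inv_left (ha3 x hx)

/-- the element `1 - M̂ + u_{k,m}(g)·M̂` of `ℚG`. -/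
def genBassElt (M : Subgroup G) (g : G) (k m : ℕ) : MonoidAlgebra ℚ G :=
  1 - hat M + bassQ g k m * hat M

/-- `u` is a generalized Bass unit of `ℤB` based on some `g ∈ B` and the subgroup `M`:
it is the minimal positive power of `1 - M̂ + u_{k,m}(g)·M̂` which is a unit of `ℤB`. -/
def IsGenBassUnitOf (B M : Subgroup G) (u : (MonoidAlgebra ℚ G)ˣ) : Prop :=
  ∃ g ∈ B, ∃ k m nn : ℕ, 0 < k ∧ 0 < m ∧ 0 < nn ∧ k ^ m ≡ 1 [MOD orderOf g] ∧
    (u : MonoidAlgebra ℚ G) = genBassElt M g k m ^ nn ∧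
    IsUnitOfZ B (u : MonoidAlgebra ℚ G) ∧
    ∀ j : ℕ, 0 < j → j < nn → ¬ IsUnitOfZ B (genBassElt M g k m ^ j)

/-- `u` is a Bass unit of `ℤG`. -/
def IsBassUnit (u : (MonoidAlgebra ℚ G)ˣ) : Prop :=
  ∃ (g : G) (k m : ℕ), 0 < k ∧ 0 < m ∧ k ^ m ≡ 1 [MOD orderOf g] ∧
    (u : MonoidAlgebra ℚ G) = bassQ g k m

/-- a (finitely generated) group `M` has (torsion-free) rank `r` iff it contains a free
abelian subgroup of rank `r` of finite index. -/
def HasRank (M : Type*) [Group M] (r : ℕ) : Prop :=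
  ∃ f : Multiplicative (Fin r → ℤ) →* M, Function.Injective f ∧ f.range.index ≠ 0

/-- `(H,K)` realizes the primitive central idempotent `e` of `ℚG`. -/
def RealizesIdem (H K : Subgroup G) (e : MonoidAlgebra ℚ G) : Prop :=
  ∃ lam : H →* ℂ, IsLinCharKer H K lam ∧ eQ lam ⊤ = e

/-- two pairs of subgroups realize the same primitive central idempotent of `ℚG`. -/
def SameIdem (p q : Subgroup G × Subgroup G) : Prop :=
  ∃ e, RealizesIdem p.1 p.2 e ∧ RealizesIdem q.1 q.2 e

/-- `S` is a complete and irredundant set of generalized strong Shoda pairs of `G`. -/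
def IsCompleteIrredundantGSSP (S : Finset (Subgroup G × Subgroup G)) : Prop :=
  (∀ p ∈ S, IsGSSP p.1 p.2) ∧
  (∀ H K : Subgroup G, IsGSSP H K → ∃ q ∈ S, SameIdem (H, K) q) ∧
  (∀ p ∈ S, ∀ q ∈ S, SameIdem p q → p = q)

/-- the center of the component `ℚG·e` is a totally real field: every embedding of it
into `ℂ` has real image. -/
def IsTotallyRealCenter (B : Subgroup G) (e : MonoidAlgebra ℚ G) : Prop :=
  ∀ f : centerCompNUS B e →ₙ+* ℂ, f ≠ 0 → ∀ α, (f α).im = 0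

/-- `T` is a right transversal of `C` in `B`. -/
def IsRightTransversal (C B : Subgroup G) (T : Finset G) : Prop :=
  (T : Set G) ⊆ (B : Set G) ∧ ∀ b ∈ B, ∃! t, t ∈ T ∧ b * t⁻¹ ∈ C

/-- `x^g = g⁻¹ x g`. -/
def zconj (g : G) (α : MonoidAlgebra ℚ G) : MonoidAlgebra ℚ G :=
  MonoidAlgebra.of ℚ G g⁻¹ * α * MonoidAlgebra.of ℚ G g

/-- `∏_{c ∈ C} α^c`. -/
def innerProd (C : Subgroup G) (α : MonoidAlgebra ℚ G) : MonoidAlgebra ℚ G :=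
  ((Finset.univ : Finset C).toList.map fun c => zconj (c : G) α).prod

/-- `∏_{t ∈ T} α^t`. -/
def outerProd (T : Finset G) (α : MonoidAlgebra ℚ G) : MonoidAlgebra ℚ G :=
  (T.toList.map fun t => zconj t α).prod

/-- the iterated construction `z^{N}(u)` along a list of pairs (centralizer, transversal). -/
def zIterAux : List (Subgroup G × Finset G) → MonoidAlgebra ℚ G → MonoidAlgebra ℚ G
  | [], α => α
  | p :: rest, α => zIterAux rest (outerProd p.2 (innerProd p.1 α))

/-- the iterated construction `c^{N}(u)` along a list of transversals. -/
def cIterAux : List (Finset G) → MonoidAlgebra ℚ G → MonoidAlgebra ℚ G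
  | [], α => α
  | T :: rest, α => cIterAux rest (outerProd T α)



open MonoidAlgebra

section Embedding

variable {B C : Subgroup G}

lemma emb_single (x : B) (r : ℚ) : emb B (single x r) = single (x : G) r :=
  mapDomain_single

lemma emb_eq_sum (β : MonoidAlgebra ℚ B) : emb B β = ∑ x : B, single (x : G) (β.coeff x) := by
  conv_lhs => rw [← β.sum_coeff_single]
  rw [Finsupp.sum_fintype _ _ fun _ => single_zero _, map_sum]
  simp only [emb_single]

lemma mem_range_emb_iff {α : MonoidAlgebra ℚ G} :
    α ∈ (emb B).range ↔ ∀ x, α.coeff x ≠ 0 → x ∈ B := by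
  constructor
  · rintro ⟨β, rfl⟩ x hx
    obtain ⟨y, -, rfl⟩ :=
      Finset.mem_image.1 (Finsupp.mapDomain_support (Finsupp.mem_support_iff.2 hx))
    exact y.2
  · intro h
    exact ⟨comapDomain B.subtype Subtype.val_injective α,
      mapDomain_comapDomain (fun x hx => ⟨⟨x, h x (Finsupp.mem_support_iff.1 hx)⟩, rfl⟩) _⟩

lemma range_emb_mono (h : B ≤ C) : (emb B).range ≤ (emb C).range := fun _ hα =>
  mem_range_emb_iff.2 fun x hx => h (mem_range_emb_iff.1 hα x hx)

lemma of_mem_range_emb {x : G} (hx : x ∈ B) : of ℚ G x ∈ (emb B).range :=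
  ⟨of ℚ B ⟨x, hx⟩, emb_single _ _⟩

lemma eQ_mem_range_emb {H : Subgroup G} (lam : H →* ℂ) (B : Subgroup G) :
    eQ lam B ∈ (emb B).range :=
  ⟨_, rfl⟩

lemma eQ_mul_self {H : Subgroup G} (lam : H →* ℂ) (B : Subgroup G) :
    eQ lam B * eQ lam B = eQ lam B := by
  rw [eQ, eQchar, ← map_mul]
  split_ifs with h
  · rw [h.choose_spec.1.2.1]
  · rw [mul_zero]

end Embedding

section Component

variable {B C : Subgroup G} {e : MonoidAlgebra ℚ G}

lemma mem_compIn_iff (heB : e ∈ (emb B).range) (he : e * e = e) {α : MonoidAlgebra ℚ G} :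
    α ∈ compIn B e ↔ α ∈ (emb B).range ∧ α * e = α := by
  constructor
  · intro hα
    induction hα using NonUnitalSubring.closure_induction with
    | mem x hx =>
      obtain ⟨β, rfl⟩ := hx
      exact ⟨mul_mem ⟨β, rfl⟩ heB, by rw [mul_assoc, he]⟩
    | zero => exact ⟨zero_mem _, zero_mul e⟩
    | add x y _ _ hx hy => exact ⟨add_mem hx.1 hy.1, by rw [add_mul, hx.2, hy.2]⟩
    | neg x _ hx => exact ⟨neg_mem hx.1, by rw [neg_mul, hx.2]⟩
    | mul x y _ _ hx hy => exact ⟨mul_mem hx.1 hy.1, by rw [mul_assoc, hy.2]⟩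
  · rintro ⟨⟨β, rfl⟩, hβ⟩
    rw [← hβ]
    exact NonUnitalSubring.subset_closure ⟨β, rfl⟩

lemma single_mul_mem_compIn {x : G} (hx : x ∈ B) (r : ℚ) : single x r * e ∈ compIn B e :=
  NonUnitalSubring.subset_closure ⟨single ⟨x, hx⟩ r, congrArg (· * e) (emb_single _ _)⟩

lemma mul_of_mem_compIn (hBC : B ≤ C) (heB : e ∈ (emb B).range) (he : e * e = e) {x : G}
    (hx : x ∈ C) (hxe : of ℚ G x * e = e * of ℚ G x) {α : MonoidAlgebra ℚ G}
    (hα : α ∈ compIn B e) : α * of ℚ G x ∈ compIn C e := by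
  obtain ⟨hαB, hαe⟩ := (mem_compIn_iff heB he).1 hα
  refine (mem_compIn_iff (range_emb_mono hBC heB) he).2
    ⟨mul_mem (range_emb_mono hBC hαB) (of_mem_range_emb hx), ?_⟩
  rw [mul_assoc, hxe, ← mul_assoc, hαe]

end Component

lemma mul_inv_mem_iff_mk_eq {Γ : Type*} [Group Γ] {N C : Subgroup Γ} [(N.subgroupOf C).Normal]
    (x y : C) : (x : Γ) * (y : Γ)⁻¹ ∈ N ↔ (x : C ⧸ N.subgroupOf C) = y := by
  rw [QuotientGroup.eq, ‹(N.subgroupOf C).Normal›.mem_comm_iff, ← inv_mem_iff,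
    Subgroup.mem_subgroupOf]
  simp

lemma conjEl_mul_cocycle_mul_of {e g : MonoidAlgebra ℚ G} {r s t : G}
    (hse : of ℚ G s * e = e * of ℚ G s) (hte : of ℚ G t * e = e * of ℚ G t) (hg : g * e = g) :
    conjEl r g * (of ℚ G (r * t * s⁻¹) * e) * of ℚ G s = of ℚ G r * (g * of ℚ G t) := by
  have hts : of ℚ G r⁻¹ * of ℚ G (r * t * s⁻¹) * of ℚ G s = of ℚ G t := by
    rw [← map_mul, ← map_mul]; group
  calc conjEl r g * (of ℚ G (r * t * s⁻¹) * e) * of ℚ G s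
      = of ℚ G r * g * (of ℚ G r⁻¹ * of ℚ G (r * t * s⁻¹) * (e * of ℚ G s)) := by
        unfold conjEl; noncomm_ring
    _ = of ℚ G r * g * (of ℚ G r⁻¹ * of ℚ G (r * t * s⁻¹) * of ℚ G s * e) := by
        rw [← hse]; noncomm_ring
    _ = of ℚ G r * (g * of ℚ G t) := by rw [hts, hte, ← mul_assoc, mul_assoc _ g, hg, mul_assoc]

section CrossedProduct

variable {N C : Subgroup G} {Q : Type*} [Fintype Q]

def crossedSum (rep : Q → C) (f : Q → MonoidAlgebra ℚ G) : MonoidAlgebra ℚ G :=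
  ∑ q, f q * of ℚ G (rep q : G)

lemma crossedSum_mem_compIn {e : MonoidAlgebra ℚ G} (hNC : N ≤ C) (heN : e ∈ (emb N).range)
    (he : e * e = e) (hCe : ∀ x : C, of ℚ G x * e = e * of ℚ G x) (rep : Q → C)
    {f : Q → MonoidAlgebra ℚ G} (hf : ∀ q, f q ∈ compIn N e) : crossedSum rep f ∈ compIn C e :=
  sum_mem fun q _ => mul_of_mem_compIn hNC heN he (rep q).2 (hCe _) (hf q)

variable [(N.subgroupOf C).Normal] [Fintype (C ⧸ N.subgroupOf C)]
  (rep : C ⧸ N.subgroupOf C → C)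

lemma coeff_crossedSum (hrep : ∀ q, (rep q : C ⧸ N.subgroupOf C) = q)
    {f : C ⧸ N.subgroupOf C → MonoidAlgebra ℚ G} (hf : ∀ q, f q ∈ (emb N).range)
    {y : G} (hy : y ∈ N) (q₀ : C ⧸ N.subgroupOf C) :
    (crossedSum rep f).coeff (y * rep q₀) = (f q₀).coeff y := by
  rw [crossedSum, coeff_sum, Finset.sum_apply', Fintype.sum_eq_single q₀]
  · rw [of_apply, coeff_mul_single_mul, mul_one]
  · intro q hq
    rw [of_apply, coeff_mul_single_apply, mul_one]
    by_contra hne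
    have hmem := mem_range_emb_iff.1 (hf q) _ hne
    rw [mul_assoc, N.mul_mem_cancel_left hy, mul_inv_mem_iff_mk_eq, hrep, hrep] at hmem
    exact hq hmem.symm

lemma eq_of_crossedSum_eq (hrep : ∀ q, (rep q : C ⧸ N.subgroupOf C) = q)
    {f g : C ⧸ N.subgroupOf C → MonoidAlgebra ℚ G} (hf : ∀ q, f q ∈ (emb N).range)
    (hg : ∀ q, g q ∈ (emb N).range) (h : crossedSum rep f = crossedSum rep g) : f = g := by
  funext q₀
  ext y
  by_cases hy : y ∈ N
  · rw [← coeff_crossedSum rep hrep hf hy, h, coeff_crossedSum rep hrep hg hy]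
  · rw [not_imp_comm.1 (mem_range_emb_iff.1 (hf q₀) y) hy,
      not_imp_comm.1 (mem_range_emb_iff.1 (hg q₀) y) hy]

lemma exists_crossedSum_eq (hrep : ∀ q, (rep q : C ⧸ N.subgroupOf C) = q)
    {e : MonoidAlgebra ℚ G} (hNC : N ≤ C) (heN : e ∈ (emb N).range) (he : e * e = e)
    (hCe : ∀ x : C, of ℚ G x * e = e * of ℚ G x) {α : MonoidAlgebra ℚ G} (hα : α ∈ compIn C e) :
    ∃ f, (∀ q, f q ∈ compIn N e) ∧ crossedSum rep f = α := by
  obtain ⟨⟨β, rfl⟩, hβe⟩ := (mem_compIn_iff (range_emb_mono hNC heN) he).1 hα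
  refine ⟨fun q => ∑ x ∈ Finset.univ.filter (fun x : C => (x : C ⧸ N.subgroupOf C) = q),
      single ((x : G) * (rep q : G)⁻¹) (β.coeff x) * e, fun q => sum_mem fun x hx => ?_, ?_⟩
  · exact single_mul_mem_compIn ((mul_inv_mem_iff_mk_eq x (rep q)).2
      ((Finset.mem_filter.1 hx).2.trans (hrep q).symm)) _
  calc ∑ q, (∑ x ∈ Finset.univ.filter (fun x : C => (x : C ⧸ N.subgroupOf C) = q),
          single ((x : G) * (rep q : G)⁻¹) (β.coeff x) * e) * of ℚ G (rep q : G)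
      = ∑ q, ∑ x ∈ Finset.univ.filter (fun x : C => (x : C ⧸ N.subgroupOf C) = q),
          single (x : G) (β.coeff x) * e := by
        refine Finset.sum_congr rfl fun q _ => ?_
        rw [Finset.sum_mul]
        refine Finset.sum_congr rfl fun x _ => ?_
        rw [mul_assoc, ← hCe, ← mul_assoc, of_apply, single_mul_single, inv_mul_cancel_right,
          mul_one]
    _ = emb C β * e := by rw [Finset.sum_fiberwise, emb_eq_sum, Finset.sum_mul]
    _ = emb C β := hβe

lemma crossedSum_mul_crossedSum {e : MonoidAlgebra ℚ G}
    (hCe : ∀ x : C, of ℚ G x * e = e * of ℚ G x) (f g : C ⧸ N.subgroupOf C → MonoidAlgebra ℚ G)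
    (hg : ∀ q, g q * e = g q) :
    crossedSum rep f * crossedSum rep g = crossedSum rep fun q =>
      ∑ p ∈ Finset.univ.filter (fun p : _ × _ => p.1 * p.2 = q),
        f p.1 * conjEl (rep p.1 : G) (g p.2) *
          (of ℚ G ((rep p.1 : G) * (rep p.2 : G) * (rep (p.1 * p.2) : G)⁻¹) * e) := by
  calc crossedSum rep f * crossedSum rep g
      = ∑ p : (C ⧸ N.subgroupOf C) × (C ⧸ N.subgroupOf C),
          f p.1 * of ℚ G (rep p.1 : G) * (g p.2 * of ℚ G (rep p.2 : G)) := by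
        rw [crossedSum, crossedSum, Finset.sum_mul_sum, Fintype.sum_prod_type]
    _ = ∑ p : (C ⧸ N.subgroupOf C) × (C ⧸ N.subgroupOf C),
          f p.1 * conjEl (rep p.1 : G) (g p.2) *
            (of ℚ G ((rep p.1 : G) * (rep p.2 : G) * (rep (p.1 * p.2) : G)⁻¹) * e) *
            of ℚ G (rep (p.1 * p.2) : G) := by
        refine Finset.sum_congr rfl fun p _ => ?_
        rw [mul_assoc (f p.1), mul_assoc (f p.1) (conjEl _ _), mul_assoc (f p.1),
          conjEl_mul_cocycle_mul_of (hCe _) (hCe _) (hg p.2)]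
    _ = _ := by
        rw [crossedSum, ← Finset.sum_fiberwise Finset.univ (fun p : _ × _ => p.1 * p.2)]
        refine Finset.sum_congr rfl fun q _ => ?_
        rw [Finset.sum_mul]
        refine Finset.sum_congr rfl fun p hp => ?_
        rw [(Finset.mem_filter.1 hp).2]

end CrossedProduct

theorem component_iso_crossed_product_general
    (G : Type) [Group G] [Fintype G] (H : Subgroup G) (lam : H →* ℂ)
    {n : ℕ} (c : Fin (n + 1) → Subgroup G) (hchain : IsStrongInductiveChain H lam c)
    (i : Fin n)
    (hN : ((c i.castSucc).subgroupOf (cen (c i.succ) (eQ lam (c i.castSucc)))).Normal) :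
    haveI := hN
    haveI : Fintype ((cen (c i.succ) (eQ lam (c i.castSucc))) ⧸
        (c i.castSucc).subgroupOf (cen (c i.succ) (eQ lam (c i.castSucc)))) :=
      Fintype.ofFinite _
    ∀ rep : ((cen (c i.succ) (eQ lam (c i.castSucc))) ⧸
          (c i.castSucc).subgroupOf (cen (c i.succ) (eQ lam (c i.castSucc)))) →
        (cen (c i.succ) (eQ lam (c i.castSucc))),
      (∀ q, QuotientGroup.mk (rep q) = q) →
      -- `e = e_ℚ(λ^{H_i})`, `σ_x` is conjugation by the representative `x̄`, and
      -- `τ(x,y) = x̄ ȳ (x̄ȳ)⁻¹ e`; `Ψ f = ∑ r_x u_x` realizes the crossed product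
      let e := eQ lam (c i.castSucc)
      let σ := fun q (α : MonoidAlgebra ℚ G) => conjEl ((rep q : G)) α
      let τ := fun q q' => MonoidAlgebra.of ℚ G ((rep q : G) * (rep q' : G) * (rep (q * q') : G)⁻¹) * e
      let Ψ := fun f : _ → MonoidAlgebra ℚ G => ∑ q, f q * MonoidAlgebra.of ℚ G (rep q : G)
      -- `Ψ` is an additive bijection from `⊕_x (ℚH_i e) u_x` onto `ℚC_i e` ...
      (∀ f, (∀ q, f q ∈ compIn (c i.castSucc) e) → Ψ f ∈ compIn (cen (c i.succ) e) e) ∧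
      (∀ f g, (∀ q, f q ∈ compIn (c i.castSucc) e) → (∀ q, g q ∈ compIn (c i.castSucc) e) →
        Ψ f = Ψ g → f = g) ∧
      (∀ α ∈ compIn (cen (c i.succ) e) e, ∃ f, (∀ q, f q ∈ compIn (c i.castSucc) e) ∧ Ψ f = α) ∧
      -- ... which transports multiplication to the crossed product multiplication
      (∀ f g, (∀ q, f q ∈ compIn (c i.castSucc) e) → (∀ q, g q ∈ compIn (c i.castSucc) e) →
        Ψ f * Ψ g = Ψ fun q => ∑ p ∈ Finset.univ.filter (fun p : _ × _ => p.1 * p.2 = q),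
          f p.1 * σ p.1 (g p.2) * τ p.1 p.2) := by
  intro rep hrep e σ τ Ψ
  let _ : Fintype ((cen (c i.succ) e) ⧸ (c i.castSucc).subgroupOf (cen (c i.succ) e)) :=
    Fintype.ofFinite _
  have hHC : c i.castSucc ≤ cen (c i.succ) e := (hchain.2.2.2 i).1.1
  have heH : e ∈ (emb (c i.castSucc)).range := eQ_mem_range_emb lam _
  have he : e * e = e := eQ_mul_self lam _
  have hCe : ∀ x : cen (c i.succ) e, of ℚ G x * e = e * of ℚ G x := fun x => x.2.2
  have hcomp : ∀ α ∈ compIn (c i.castSucc) e, α ∈ (emb (c i.castSucc)).range ∧ α * e = α :=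
    fun α => (mem_compIn_iff heH he).1
  exact ⟨fun _ => crossedSum_mem_compIn hHC heH he hCe rep,
    fun f g hf hg => eq_of_crossedSum_eq rep hrep (fun q => (hcomp _ (hf q)).1)
      (fun q => (hcomp _ (hg q)).1),
    fun _ => exists_crossedSum_eq rep hrep hHC heH he hCe,
    fun f g _ hg => crossedSum_mul_crossedSum rep hCe f g fun q => (hcomp _ (hg q)).2⟩

/-- For a generalized strong Shoda pair `(H,K)` of `G` with strong inductive
chain `H = H_0 ≤ ⋯ ≤ H_n = G`, the algebra `ℚC_i e_ℚ(λ^{H_i})` is isomorphic to the crossed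
product `ℚH_i e_ℚ(λ^{H_i}) *^σ_τ C_i/H_i`. -/
theorem component_iso_crossed_product
    (G : Type) [Group G] [Fintype G] (H K : Subgroup G) (lam : H →* ℂ)
    (hSP : IsShodaPair H K) (hker : IsLinCharKer H K lam)
    {n : ℕ} (c : Fin (n + 1) → Subgroup G) (hchain : IsStrongInductiveChain H lam c)
    (i : Fin n)
    (hN : ((c i.castSucc).subgroupOf (cen (c i.succ) (eQ lam (c i.castSucc)))).Normal) :
    haveI := hN
    haveI : Fintype ((cen (c i.succ) (eQ lam (c i.castSucc))) ⧸
        (c i.castSucc).subgroupOf (cen (c i.succ) (eQ lam (c i.castSucc)))) :=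
      Fintype.ofFinite _
    ∀ rep : ((cen (c i.succ) (eQ lam (c i.castSucc))) ⧸
          (c i.castSucc).subgroupOf (cen (c i.succ) (eQ lam (c i.castSucc)))) →
        (cen (c i.succ) (eQ lam (c i.castSucc))),
      (∀ q, QuotientGroup.mk (rep q) = q) →
      -- `e = e_ℚ(λ^{H_i})`, `σ_x` is conjugation by the representative `x̄`, and
      -- `τ(x,y) = x̄ ȳ (x̄ȳ)⁻¹ e`; `Ψ f = ∑ r_x u_x` realizes the crossed product
      let e := eQ lam (c i.castSucc)
      let σ := fun q (α : MonoidAlgebra ℚ G) => conjEl ((rep q : G)) α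
      let τ := fun q q' => MonoidAlgebra.of ℚ G ((rep q : G) * (rep q' : G) * (rep (q * q') : G)⁻¹) * e
      let Ψ := fun f : _ → MonoidAlgebra ℚ G => ∑ q, f q * MonoidAlgebra.of ℚ G (rep q : G)
      -- `Ψ` is an additive bijection from `⊕_x (ℚH_i e) u_x` onto `ℚC_i e` ...
      (∀ f, (∀ q, f q ∈ compIn (c i.castSucc) e) → Ψ f ∈ compIn (cen (c i.succ) e) e) ∧
      (∀ f g, (∀ q, f q ∈ compIn (c i.castSucc) e) → (∀ q, g q ∈ compIn (c i.castSucc) e) →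
        Ψ f = Ψ g → f = g) ∧
      (∀ α ∈ compIn (cen (c i.succ) e) e, ∃ f, (∀ q, f q ∈ compIn (c i.castSucc) e) ∧ Ψ f = α) ∧
      -- ... which transports multiplication to the crossed product multiplication
      (∀ f g, (∀ q, f q ∈ compIn (c i.castSucc) e) → (∀ q, g q ∈ compIn (c i.castSucc) e) →
        Ψ f * Ψ g = Ψ fun q => ∑ p ∈ Finset.univ.filter (fun p : _ × _ => p.1 * p.2 = q),
          f p.1 * σ p.1 (g p.2) * τ p.1 p.2) :=
  component_iso_crossed_product_general G H lam c hchain i hN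

end PaperGSM
end
end

section
/- Let N be a normal subgroup of a finite group C, let χ be a complex irreducible character of N, and let e_ℚ(χ) = (1/|N|) Σ_{σ ∈ Gal(ℚ(χ)/ℚ)} Σ_{n ∈ N} σ(χ(n)) n^{-1} be the primitive central idempotent of ℚN associated to χ. Suppose x ∈ C centralizes e_ℚ(χ) and there is a unit u of the algebra ℚN e_ℚ(χ) such that x α x^{-1} = u α u^{-1} for all α ∈ ℚN e_ℚ(χ). Then the conjugate character χ^x, defined by χ^x(n) = χ(x n x^{-1}), equals χ. -/
open scoped Classical
set_option linter.unusedSectionVars false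

noncomputable section

namespace PaperGSM

variable {G : Type} [Group G] [Fintype G]

/-!
Schur's lemma makes `e_ℚ(χ)` act as the identity on a simple module affording `χ`, so the
central element `∑ n, χ(n⁻¹) n` of `ℂN` is absorbed by `e_ℚ(χ)`. Its rational coordinates,
taken along the `ℚ`-linear functionals `ℂ → ℚ`, are therefore central elements of `ℚN·e_ℚ(χ)`,
and the inner automorphism induced by `x` fixes them. Comparing coefficients gives
`χ(x n x⁻¹) = χ(n)`.
-/

open CategoryTheory Module

section Idempotents

variable {K A : Type*} [Field K] [Ring A] [Algebra K A] [FiniteDimensional K A]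

lemma finrank_range_mulLeft_lt_of_orthogonal {a b : A} (ha : IsIdempotentElem a)
    (hb : IsIdempotentElem b) (hab : a * b = 0) (hba : b * a = 0) (hb0 : b ≠ 0) :
    finrank K (LinearMap.range (LinearMap.mulLeft K a)) <
      finrank K (LinearMap.range (LinearMap.mulLeft K (a + b))) := by
  refine Submodule.finrank_lt_finrank_of_lt (SetLike.lt_iff_le_and_exists.2 ⟨?_, b, ?_, ?_⟩)
  · rintro _ ⟨z, rfl⟩
    refine ⟨a * z, ?_⟩
    simp only [LinearMap.mulLeft_apply, ← mul_assoc, add_mul, ha.eq, hba, add_zero]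
  · exact ⟨b, by simp only [LinearMap.mulLeft_apply, add_mul, hab, hb.eq, zero_add]⟩
  · rintro ⟨z, hz⟩
    -- `b = a z` would give `b = b b = b a z = 0`
    refine hb0 ?_
    rw [← hb.eq]
    nth_rw 2 [← hz]
    simp only [LinearMap.mulLeft_apply, ← mul_assoc, hba, zero_mul]

end Idempotents

section PrimitiveIdempotent

variable {Γ : Type} [Group Γ] [Fintype Γ]

lemma extChar_add (χ : Γ → ℂ) (a b : MonoidAlgebra ℚ Γ) :
    extChar χ (a + b) = extChar χ a + extChar χ b := by
  simp only [extChar, MonoidAlgebra.coeff_add, Finsupp.add_apply, Rat.cast_add, add_mul,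
    Finset.sum_add_distrib]

lemma extChar_one (χ : Γ → ℂ) : extChar χ 1 = χ 1 := by
  rw [extChar, Finset.sum_eq_single 1 (fun g _ hg => by simp [MonoidAlgebra.one_def, hg])
    (by simp)]
  simp [MonoidAlgebra.one_def]

/-- Descend from a central idempotent along nontrivial orthogonal splittings, which shrink
the dimension of the ideal it generates. -/
lemma exists_isPCI_extChar_ne_zero_of_central {χ : Γ → ℂ} {c : MonoidAlgebra ℚ Γ}
    (hc : ∀ α, c * α = α * c) (hcc : IsIdempotentElem c) (hχc : extChar χ c ≠ 0) :
    ∃ e, IsPCI e ∧ extChar χ e ≠ 0 := by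
  induction hn : finrank ℚ (LinearMap.range (LinearMap.mulLeft ℚ c))
    using Nat.strong_induction_on generalizing c with
  | _ n ih =>
    by_cases hprim : IsPCI c
    · exact ⟨c, hprim, hχc⟩
    have hc0 : c ≠ 0 := by rintro rfl; simp [extChar] at hχc
    obtain ⟨a, b, ha, hb, haa, hbb, hab, rfl, ha0, hb0⟩ : ∃ a b : MonoidAlgebra ℚ Γ,
        (∀ α, a * α = α * a) ∧ (∀ α, b * α = α * b) ∧ IsIdempotentElem a ∧
        IsIdempotentElem b ∧ a * b = 0 ∧ a + b = c ∧ a ≠ 0 ∧ b ≠ 0 := by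
      simpa [IsPCI, IsIdempotentElem, hc, hcc.eq, hc0] using hprim
    have hba : b * a = 0 := by rw [hb, hab]
    rw [extChar_add] at hχc
    by_cases hχa : extChar χ a = 0
    · refine ih _ ?_ hb hbb (by simpa [hχa] using hχc) rfl
      rw [← hn, add_comm]
      exact finrank_range_mulLeft_lt_of_orthogonal hbb haa hba hab ha0
    · exact ih _ (hn ▸ finrank_range_mulLeft_lt_of_orthogonal haa hbb hab hba hb0)
        ha haa hχa rfl

lemma eQchar_spec {χ : Γ → ℂ} (hχ : χ 1 ≠ 0) :
    IsPCI (eQchar χ) ∧ extChar χ (eQchar χ) ≠ 0 := by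
  have h : ∃ e, IsPCI e ∧ extChar χ e ≠ 0 :=
    exists_isPCI_extChar_ne_zero_of_central (c := 1) (fun α => by rw [one_mul, mul_one])
      IsIdempotentElem.one (by rwa [extChar_one])
  rw [eQchar, dif_pos h]
  exact h.choose_spec

end PrimitiveIdempotent

section Schur

variable {k Γ : Type} [Field k] [Monoid Γ]

lemma nontrivial_of_simple (V : FDRep k Γ) [Simple V] : Nontrivial V := by
  by_contra h
  rw [not_nontrivial_iff_subsingleton] at h
  refine id_nonzero V (Action.Hom.ext (FGModuleCat.hom_ext (LinearMap.ext fun v => ?_)))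
  exact Subsingleton.elim _ _

lemma exists_eq_smul_one_of_commute [IsAlgClosed k] (V : FDRep k Γ) [Simple V]
    {A : Module.End k V} (hA : ∀ g, A * V.ρ g = V.ρ g * A) : ∃ c : k, A = c • 1 := by
  let θ : V ⟶ V := ⟨FGModuleCat.ofHom A, fun g => FGModuleCat.hom_ext (hA g)⟩
  obtain ⟨c, hc⟩ := endomorphism_simple_eq_smul_id k θ
  exact ⟨c, (congrArg (fun f : V ⟶ V => f.hom.hom.hom) hc).symm⟩

end Schur

section RationalGroupAlgebra

variable {Γ : Type} [Group Γ]

def ratAction (V : FDRep ℂ Γ) : MonoidAlgebra ℚ Γ →+* Module.End ℂ V :=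
  (Representation.asAlgebraHom V.ρ).toRingHom.comp
    (MonoidAlgebra.mapRingHom Γ (algebraMap ℚ ℂ))

lemma ratAction_of (V : FDRep ℂ Γ) (g : Γ) :
    ratAction V (MonoidAlgebra.of ℚ Γ g) = V.ρ g := by
  simp [ratAction]

lemma ratAction_eq_sum [Fintype Γ] (V : FDRep ℂ Γ) (α : MonoidAlgebra ℚ Γ) :
    ratAction V α = ∑ g, (α.coeff g : ℂ) • V.ρ g := by
  conv_lhs => rw [← MonoidAlgebra.sum_coeff_single α, Finsupp.sum_fintype _ _ (by simp)]
  simp [ratAction, MonoidAlgebra.mapRingHom_single, Representation.asAlgebraHom_single]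

lemma trace_ratAction_mul [Fintype Γ] (V : FDRep ℂ Γ) (α : MonoidAlgebra ℚ Γ)
    (f : Module.End ℂ V) :
    LinearMap.trace ℂ V (ratAction V α * f) =
      ∑ g, (α.coeff g : ℂ) * LinearMap.trace ℂ V (V.ρ g * f) := by
  simp [ratAction_eq_sum, Finset.sum_mul]

lemma trace_ratAction [Fintype Γ] (V : FDRep ℂ Γ) (α : MonoidAlgebra ℚ Γ) :
    LinearMap.trace ℂ V (ratAction V α) = extChar V.character α := by
  simpa [extChar, FDRep.character] using trace_ratAction_mul V α 1

end RationalGroupAlgebra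

section IrreducibleCharacter

variable {Γ : Type} [Group Γ]

/-- Schur's lemma makes a central idempotent act on a simple module by a scalar `c` with
`c² = c`, and `c ≠ 0` since the trace `extChar χ e = c · χ(1)` does not vanish. -/
lemma ratAction_eq_one_of_central [Fintype Γ] (V : FDRep ℂ Γ) [Simple V]
    {e : MonoidAlgebra ℚ Γ} (he : ∀ α, e * α = α * e) (hee : IsIdempotentElem e)
    (hχe : extChar V.character e ≠ 0) : ratAction V e = 1 := by
  have := nontrivial_of_simple V
  obtain ⟨c, hc⟩ := exists_eq_smul_one_of_commute V (A := ratAction V e) fun g => by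
    rw [← ratAction_of, ← map_mul, ← map_mul, he]
  have hc0 : c ≠ 0 := by
    rintro rfl
    rw [← trace_ratAction, hc, zero_smul, map_zero] at hχe
    exact hχe rfl
  have hcc : c * c = c := by
    have h := congrArg (ratAction V) hee.eq
    rw [map_mul, hc, smul_mul_smul_comm, one_mul] at h
    exact smul_left_injective ℂ one_ne_zero h
  rw [hc, mul_left_cancel₀ hc0 (hcc.trans (mul_one c).symm), one_smul]

lemma IsIrrChar.apply_one_ne_zero {χ : Γ → ℂ} (hχ : IsIrrChar Γ χ) : χ 1 ≠ 0 := by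
  obtain ⟨V, hV, rfl⟩ := hχ
  have := nontrivial_of_simple V
  simpa using Module.finrank_pos.ne'

lemma IsIrrChar.apply_mul_comm {χ : Γ → ℂ} (hχ : IsIrrChar Γ χ) (a b : Γ) :
    χ (a * b) = χ (b * a) := by
  obtain ⟨V, -, rfl⟩ := hχ
  exact V.char_mul_comm b a

lemma IsIrrChar.sum_coeff_mul_apply_mul [Fintype Γ] {χ : Γ → ℂ} (hχ : IsIrrChar Γ χ)
    {e : MonoidAlgebra ℚ Γ} (he : ∀ α, e * α = α * e) (hee : IsIdempotentElem e)
    (hχe : extChar χ e ≠ 0) (g : Γ) :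
    ∑ b, (e.coeff b : ℂ) * χ (b * g) = χ g := by
  obtain ⟨V, hV, rfl⟩ := hχ
  have h := trace_ratAction_mul V e (V.ρ g)
  rw [ratAction_eq_one_of_central V he hee hχe, one_mul] at h
  simpa [FDRep.character] using h.symm

end IrreducibleCharacter

section DualComponent

lemma commute_of_coeff_mul_comm {R G : Type*} [CommSemiring R] [Group G]
    {x : MonoidAlgebra R G} (hx : ∀ a b, x.coeff (a * b) = x.coeff (b * a))
    (y : MonoidAlgebra R G) : Commute x y := by
  ext g
  rw [MonoidAlgebra.coeff_mul_apply_right, MonoidAlgebra.coeff_mul_apply_left]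
  exact Finsupp.sum_congr fun h _ => by rw [hx, mul_comm]

variable {Γ : Type} [Group Γ] [Fintype Γ]

/-- As `f` runs over the `ℚ`-linear functionals on `ℂ`, these are the rational coordinates
of the central element `∑ g, χ(g⁻¹) g` of `ℂΓ`. -/
def dualComponent (f : Module.Dual ℚ ℂ) (χ : Γ → ℂ) : MonoidAlgebra ℚ Γ :=
  .ofCoeff (Finsupp.equivFunOnFinite.symm fun g => f (χ g⁻¹))

@[simp]
lemma coeff_dualComponent (f : Module.Dual ℚ ℂ) (χ : Γ → ℂ) (g : Γ) :
    (dualComponent f χ).coeff g = f (χ g⁻¹) := by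
  simp [dualComponent]

lemma commute_dualComponent {χ : Γ → ℂ} (hχ : IsIrrChar Γ χ) (f : Module.Dual ℚ ℂ)
    (β : MonoidAlgebra ℚ Γ) : Commute (dualComponent f χ) β :=
  commute_of_coeff_mul_comm (fun a b => by simp [hχ.apply_mul_comm]) β

lemma dualComponent_mul_of_central {χ : Γ → ℂ} (hχ : IsIrrChar Γ χ)
    (f : Module.Dual ℚ ℂ) {e : MonoidAlgebra ℚ Γ} (he : ∀ α, e * α = α * e)
    (hee : IsIdempotentElem e) (hχe : extChar χ e ≠ 0) :
    dualComponent f χ * e = dualComponent f χ := by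
  ext g
  rw [MonoidAlgebra.coeff_mul_apply_right, Finsupp.sum_fintype _ _ (by simp),
    coeff_dualComponent, ← hχ.sum_coeff_mul_apply_mul he hee hχe g⁻¹]
  simp only [map_sum, ← Rat.smul_def, map_smul, smul_eq_mul]
  exact Finset.sum_congr rfl fun b _ => by simp [mul_comm]

end DualComponent

section SubgroupAlgebra

variable {Γ : Type} [Group Γ]

lemma coeff_conjEl (g : Γ) (α : MonoidAlgebra ℚ Γ) (h : Γ) :
    (conjEl g α).coeff h = α.coeff (g⁻¹ * h * g) := by
  simp [conjEl, mul_assoc]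

lemma coeff_emb_coe (B : Subgroup Γ) (β : MonoidAlgebra ℚ B) (b : B) :
    (emb B β).coeff b = β.coeff b :=
  Finsupp.mapDomain_apply B.subtype_injective _ b

lemma exists_emb_eq_of_mem_compIn {B : Subgroup Γ} {e : MonoidAlgebra ℚ B}
    {α : MonoidAlgebra ℚ Γ} (hα : α ∈ compIn B (emb B e)) : ∃ β, emb B β = α := by
  refine (NonUnitalSubring.closure_le (t := (emb B).range.toNonUnitalSubring)).2 ?_ hα
  rintro _ ⟨β, rfl⟩
  exact ⟨β * e, map_mul _ _ _⟩

/-- An inner automorphism of `ℚB·e` fixes its centre, which contains the images of the central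
elements of `ℚB` absorbed by `e`. -/
lemma conjEl_emb_eq_self_of_inner {B : Subgroup Γ} {e z : MonoidAlgebra ℚ B}
    (hz : ∀ β, Commute z β) (hze : z * e = z) {x : Γ} {u v : MonoidAlgebra ℚ Γ}
    (hu : u ∈ compIn B (emb B e)) (huv : u * v = emb B e)
    (hconj : ∀ α ∈ compIn B (emb B e), conjEl x α = u * α * v) :
    conjEl x (emb B z) = emb B z := by
  obtain ⟨β, rfl⟩ := exists_emb_eq_of_mem_compIn hu
  have hmem : emb B z ∈ compIn B (emb B e) := by
    rw [← hze, map_mul]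
    exact NonUnitalSubring.subset_closure ⟨z, rfl⟩
  rw [hconj _ hmem, ← map_mul, ← (hz β).eq, map_mul, mul_assoc, huv, ← map_mul, hze]

end SubgroupAlgebra

theorem conj_char_eq_of_inner_general
    (C : Type) [Group C] [Fintype C] (N : Subgroup C) (hN : N.Normal)
    (χ : N → ℂ) (hχ : IsIrrChar N χ) (x : C)
    (hinner : ∃ u v : MonoidAlgebra ℚ C,
      u ∈ compIn N (emb N (eQchar χ)) ∧ v ∈ compIn N (emb N (eQchar χ)) ∧
      u * v = emb N (eQchar χ) ∧ v * u = emb N (eQchar χ) ∧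
      ∀ α ∈ compIn N (emb N (eQchar χ)), conjEl x α = u * α * v) :
    ∀ nn : N, χ ⟨x * ↑nn * x⁻¹, hN.conj_mem ↑nn nn.2 x⟩ = χ nn := by
  intro nn
  set m : N := ⟨x * ↑nn * x⁻¹, hN.conj_mem ↑nn nn.2 x⟩
  obtain ⟨u, v, hu, -, huv, -, hconj⟩ := hinner
  obtain ⟨⟨he, hee, -⟩, hχe⟩ := eQchar_spec hχ.apply_one_ne_zero
  refine sub_eq_zero.1 ((Module.forall_dual_apply_eq_zero_iff ℚ _).1 fun f => ?_)
  have hfix := conjEl_emb_eq_self_of_inner (commute_dualComponent hχ f)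
    (dualComponent_mul_of_central hχ f he hee hχe) hu huv hconj
  have hcoeff := congrArg (fun α => α.coeff ((m⁻¹ : N) : C)) hfix
  have hm : x⁻¹ * ((m⁻¹ : N) : C) * x = ((nn⁻¹ : N) : C) := by simp [m, mul_assoc]
  simp only [coeff_conjEl, hm, coeff_emb_coe, coeff_dualComponent, inv_inv] at hcoeff
  rw [map_sub, hcoeff, sub_self]

/-- If `N ⊴ C`, `χ` is an irreducible character of `N`, and `x ∈ C`
centralizes `e_ℚ(χ)` and acts on `ℚN e_ℚ(χ)` as an inner automorphism, then `χ^x = χ`. -/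
theorem conj_char_eq_of_inner
    (C : Type) [Group C] [Fintype C] (N : Subgroup C) (hN : N.Normal)
    (χ : N → ℂ) (hχ : IsIrrChar N χ) (x : C)
    (hx : MonoidAlgebra.of ℚ C x * emb N (eQchar χ) =
      emb N (eQchar χ) * MonoidAlgebra.of ℚ C x)
    (hinner : ∃ u v : MonoidAlgebra ℚ C,
      u ∈ compIn N (emb N (eQchar χ)) ∧ v ∈ compIn N (emb N (eQchar χ)) ∧
      u * v = emb N (eQchar χ) ∧ v * u = emb N (eQchar χ) ∧
      ∀ α ∈ compIn N (emb N (eQchar χ)), conjEl x α = u * α * v) :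
    ∀ nn : N, χ ⟨x * ↑nn * x⁻¹, hN.conj_mem ↑nn nn.2 x⟩ = χ nn :=
  conj_char_eq_of_inner_general C N hN χ hχ x hinner

end PaperGSM
end
end
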